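/- Counting confluence: if a relation → satisfies the diamond property, and a reduces to b in m steps and to c in n steps, then there exists d such that b reduces to d in at most n steps and c reduces to d in at most m steps. -/

import Mathlib

/-!
Tile the `m × n` grid of reductions with diamonds. A single step `a → b` against an `n`-step
reduction `a →ⁿ c` closes with at most `n` steps from `b` and at most one from `c` (the strip
lemma, by induction on `n`); stacking `m` such strips, by induction on `m`, gives the theorem.
Degenerate diamonds only shorten the sides, which is why the bounds are inequalities.
-/

/-- `StepsN r n a b` : `a` reduces to `b` in exactly `n` steps of `r`. -/
def StepsN {α : Type*} (r : α → α → Prop) : ℕ → α → α → Prop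
  | 0, a, b => a = b
  | n + 1, a, b => ∃ c, r a c ∧ StepsN r n c b

def DiamondProperty {α : Type*} (r : α → α → Prop) : Prop :=
  ∀ a b c : α, r a b → r a c → ∃ d, (r b d ∨ b = d) ∧ (r c d ∨ c = d)

section

variable {α : Type*} {r : α → α → Prop} {a b c d e : α} {j n : ℕ}

lemma StepsN.exists_le_succ_of_step_or_eq (hed : StepsN r j e d) (hbe : r b e ∨ b = e) :
    ∃ k ≤ j + 1, StepsN r k b d := by
  rcases hbe with hbe | rfl
  · exact ⟨j + 1, le_rfl, e, hbe, hed⟩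
  · exact ⟨j, j.le_succ, hed⟩

lemma DiamondProperty.strip (hr : DiamondProperty r) (hab : r a b) (hac : StepsN r n a c) :
    ∃ d, ∃ j ≤ n, StepsN r j b d ∧ (r c d ∨ c = d) := by
  induction n generalizing a b with
  | zero =>
    cases hac
    exact ⟨b, 0, le_rfl, rfl, .inl hab⟩
  | succ n ih =>
    obtain ⟨a₁, haa₁, ha₁c⟩ := hac
    obtain ⟨e, hbe, ha₁e⟩ := hr a b a₁ hab haa₁
    rcases ha₁e with ha₁e | rfl
    · obtain ⟨d, j, hj, hed, hcd⟩ := ih ha₁e ha₁c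
      obtain ⟨k, hk, hbd⟩ := hed.exists_le_succ_of_step_or_eq hbe
      exact ⟨d, k, hk.trans (by omega), hbd, hcd⟩
    · obtain ⟨k, hk, hbc⟩ := ha₁c.exists_le_succ_of_step_or_eq hbe
      exact ⟨c, k, hk, hbc, .inr rfl⟩

end

/-- Counting confluence: with the diamond property, if `a` reduces to `b` in `m` steps and
to `c` in `n` steps, there is `d` with `b` reducing to `d` in at most `n` steps and `c`
reducing to `d` in at most `m` steps. -/
theorem counting_confluence {α : Type*} (r : α → α → Prop)
    (hdiam : ∀ a b c : α, r a b → r a c →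
      ∃ d, (r b d ∨ b = d) ∧ (r c d ∨ c = d)) :
    ∀ (m n : ℕ) (a b c : α), StepsN r m a b → StepsN r n a c →
      ∃ d j k, j ≤ n ∧ k ≤ m ∧ StepsN r j b d ∧ StepsN r k c d := by
  intro m
  induction m with
  | zero =>
    rintro n a b c rfl hac
    exact ⟨c, n, 0, le_rfl, le_rfl, hac, rfl⟩
  | succ m ih =>
    rintro n a b c ⟨b₁, hab₁, hb₁b⟩ hac
    obtain ⟨e, j, hj, hb₁e, hce⟩ := DiamondProperty.strip hdiam hab₁ hac
    obtain ⟨d, j', k', hj', hk', hbd, hed⟩ := ih j b₁ b e hb₁b hb₁e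
    obtain ⟨k, hk, hcd⟩ := hed.exists_le_succ_of_step_or_eq hce
    exact ⟨d, j', k, hj'.trans hj, hk.trans (by omega), hbd, hcd⟩
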